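/- Let 𝐋(s) be the block pencil with rows [Ã₀+sA₁, sA₂, Ǎ], [sI, −I, 0], [(c₀+sc₁)⊗I, 0, (C₀+sC₁)⊗I], where Ǎ = Σ_j a_jᵀ⊗A_{−j}, and suppose C₀+sC₁ is invertible at s. Then 𝐋(s) = 𝐔(s)·𝐑(s), where 𝐔(s) is block upper triangular with identity diagonal blocks and first block row [I, −sA₂, Ǎ((C₀+sC₁)⁻¹⊗I)], and 𝐑(s) is the pencil with rows [R(s), 0, 0], [sI, −I, 0], [(c₀+sc₁)⊗I, 0, (C₀+sC₁)⊗I], with R(s) = Ã₀+sA₁+s²A₂ + Σ_j (a_jᵀΦ(s))A_{−j}. In particular det 𝐋(s) = det R(s) · det(−I) · det((C₀+sC₁)⊗I). -/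
import Mathlib


open Matrix Kronecker

/-- Block UL factorization of the linearization pencil: `𝐋(s) = 𝐔(s)·𝐑(s)` with
`𝐔(s)` block upper triangular with identity diagonal blocks, and in particular
`det 𝐋(s) = det R(s) · det(−I) · det((C₀+sC₁) ⊗ I)`. -/
theorem linearization_UL_factorization {n d m : ℕ} (s : ℂ)
    (A0 A1 A2 : Matrix (Fin n) (Fin n) ℂ) (Am : Fin m → Matrix (Fin n) (Fin n) ℂ)
    (α : Fin m → ℂ) (a : Fin m → Fin d → ℂ)
    (c0 c1 : Fin d → ℂ) (C0 C1 : Matrix (Fin d) (Fin d) ℂ)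
    (hC : IsUnit (C0 + s • C1)) :
    let Φ : Fin d → ℂ := -((C0 + s • C1)⁻¹.mulVec (c0 + s • c1))
    let R : Matrix (Fin n) (Fin n) ℂ :=
      A0 + s • A1 + s ^ 2 • A2 + ∑ j, (α j + a j ⬝ᵥ Φ) • Am j
    let At0 : Matrix (Fin n) (Fin n) ℂ := A0 + ∑ j, α j • Am j
    let L : Matrix (Fin n ⊕ (Fin n ⊕ Fin d × Fin n))
        (Fin n ⊕ (Fin n ⊕ Fin d × Fin n)) ℂ :=
      Matrix.of fun r c =>
        match r, c with
        | Sum.inl i, Sum.inl i' => (At0 + s • A1) i i'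
        | Sum.inl i, Sum.inr (Sum.inl i') => (s • A2) i i'
        | Sum.inl i, Sum.inr (Sum.inr ki') => ∑ j, a j ki'.1 * Am j i ki'.2
        | Sum.inr (Sum.inl i), Sum.inl i' => s * (if i = i' then 1 else 0)
        | Sum.inr (Sum.inl i), Sum.inr (Sum.inl i') => -(if i = i' then 1 else 0)
        | Sum.inr (Sum.inl _), Sum.inr (Sum.inr _) => 0
        | Sum.inr (Sum.inr ki), Sum.inl i' =>
            (c0 ki.1 + s * c1 ki.1) * (if ki.2 = i' then 1 else 0)
        | Sum.inr (Sum.inr _), Sum.inr (Sum.inl _) => 0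
        | Sum.inr (Sum.inr ki), Sum.inr (Sum.inr li') =>
            (C0 ki.1 li'.1 + s * C1 ki.1 li'.1) * (if ki.2 = li'.2 then 1 else 0)
    let U : Matrix (Fin n ⊕ (Fin n ⊕ Fin d × Fin n))
        (Fin n ⊕ (Fin n ⊕ Fin d × Fin n)) ℂ :=
      Matrix.of fun r c =>
        match r, c with
        | Sum.inl i, Sum.inl i' => if i = i' then 1 else 0
        | Sum.inl i, Sum.inr (Sum.inl i') => -((s • A2) i i')
        | Sum.inl i, Sum.inr (Sum.inr ki') =>
            ∑ j, Matrix.vecMul (a j) (C0 + s • C1)⁻¹ ki'.1 * Am j i ki'.2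
        | Sum.inr (Sum.inl i), Sum.inr (Sum.inl i') => if i = i' then 1 else 0
        | Sum.inr (Sum.inr ki), Sum.inr (Sum.inr li') => if ki = li' then 1 else 0
        | _, _ => 0
    let Rbig : Matrix (Fin n ⊕ (Fin n ⊕ Fin d × Fin n))
        (Fin n ⊕ (Fin n ⊕ Fin d × Fin n)) ℂ :=
      Matrix.of fun r c =>
        match r, c with
        | Sum.inl i, Sum.inl i' => R i i'
        | Sum.inl _, Sum.inr _ => 0
        | Sum.inr (Sum.inl i), Sum.inl i' => s * (if i = i' then 1 else 0)
        | Sum.inr (Sum.inl i), Sum.inr (Sum.inl i') => -(if i = i' then 1 else 0)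
        | Sum.inr (Sum.inl _), Sum.inr (Sum.inr _) => 0
        | Sum.inr (Sum.inr ki), Sum.inl i' =>
            (c0 ki.1 + s * c1 ki.1) * (if ki.2 = i' then 1 else 0)
        | Sum.inr (Sum.inr _), Sum.inr (Sum.inl _) => 0
        | Sum.inr (Sum.inr ki), Sum.inr (Sum.inr li') =>
            (C0 ki.1 li'.1 + s * C1 ki.1 li'.1) * (if ki.2 = li'.2 then 1 else 0)
    L = U * Rbig ∧
      L.det = R.det * (-1 : Matrix (Fin n) (Fin n) ℂ).det *
        ((C0 + s • C1) ⊗ₖ (1 : Matrix (Fin n) (Fin n) ℂ)).det := by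

  intro Φ R At0 L U Rbig
  have hCd : IsUnit (C0 + s • C1).det := (Matrix.isUnit_iff_isUnit_det _).mp hC
  have hinv : (C0 + s • C1)⁻¹ * (C0 + s • C1) = 1 := Matrix.nonsing_inv_mul _ hCd
  have key : ∀ p : Fin m, (a p ᵥ* (C0 + s • C1)⁻¹) ᵥ* (C0 + s • C1) = a p := by
    intro p
    rw [Matrix.vecMul_vecMul, hinv, Matrix.vecMul_one]
  have hmul : L = U * Rbig := by
    ext r c
    rcases r with i | i | ⟨k, i⟩ <;> rcases c with i' | i' | ⟨l, i'⟩ <;>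
      simp only [L, U, Rbig, Matrix.mul_apply, Fintype.sum_sum_type, Matrix.of_apply,
        ite_mul, mul_ite, mul_zero, zero_mul, mul_one, one_mul, mul_neg, neg_mul,
        Finset.sum_ite_eq, Finset.sum_ite_eq', Finset.mem_univ, if_true,
        Finset.sum_const_zero, add_zero, zero_add, neg_zero]
    · -- (inl, inl)
      have hswap : (∑ x : Fin d × Fin n, if x.2 = i' then
          (∑ j : Fin m, (a j ᵥ* (C0 + s • C1)⁻¹) x.1 * Am j i x.2) * (c0 x.1 + s * c1 x.1) else 0)
          = ∑ p : Fin m, (a p ⬝ᵥ ((C0 + s • C1)⁻¹ *ᵥ (c0 + s • c1))) * Am p i i' := by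
        rw [Fintype.sum_prod_type]
        simp only [Fintype.sum_ite_eq', Finset.sum_mul]
        rw [Finset.sum_comm]
        refine Finset.sum_congr rfl fun p _ => ?_
        rw [Matrix.dotProduct_mulVec, dotProduct, Finset.sum_mul]
        refine Finset.sum_congr rfl fun k _ => ?_
        simp only [Pi.add_apply, Pi.smul_apply, smul_eq_mul]
        ring
      rw [hswap]
      have hcancel : ∑ p, (α p + a p ⬝ᵥ Φ) * Am p i i'
          + ∑ p, (a p ⬝ᵥ ((C0 + s • C1)⁻¹ *ᵥ (c0 + s • c1))) * Am p i i'
          = ∑ p, α p * Am p i i' := by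
        rw [← Finset.sum_add_distrib]
        refine Finset.sum_congr rfl fun p _ => ?_
        simp only [Φ, dotProduct_neg]
        ring
      simp only [R, At0, Matrix.add_apply, Matrix.smul_apply, Matrix.sum_apply,
        smul_eq_mul]
      linear_combination -hcancel
    · -- (inl, inr inl)
      simp
    · -- (inl, inr inr)
      rw [Fintype.sum_prod_type]
      simp only [Fintype.sum_ite_eq', Finset.sum_mul]
      rw [Finset.sum_comm]
      refine Finset.sum_congr rfl fun p _ => ?_
      rw [show a p l = ((a p ᵥ* (C0 + s • C1)⁻¹) ᵥ* (C0 + s • C1)) l from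
        (congrFun (key p) l).symm]
      simp only [Matrix.vecMul, dotProduct, Matrix.add_apply, Matrix.smul_apply,
        smul_eq_mul, Finset.sum_mul]
      exact Finset.sum_congr rfl fun k _ => Finset.sum_congr rfl fun x _ => by ring
    · simp
    · simp
    · simp
    · -- (inr inr, inl)
      rw [Fintype.sum_prod_type]
      simp [Prod.ext_iff, ite_and, Finset.sum_ite_eq, Finset.sum_ite_eq',
        Fintype.sum_ite_eq, Fintype.sum_ite_eq']
    · simp
    · -- (inr inr, inr inr)
      rw [Fintype.sum_prod_type]
      simp [Prod.ext_iff, ite_and, Finset.sum_ite_eq, Finset.sum_ite_eq',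
        Fintype.sum_ite_eq, Fintype.sum_ite_eq']
  refine ⟨hmul, ?_⟩
  have hU : U = Matrix.fromBlocks 1
      (Matrix.of fun i x => Sum.elim (fun i' => -((s • A2) i i'))
        (fun ki' : Fin d × Fin n => ∑ j, Matrix.vecMul (a j) (C0 + s • C1)⁻¹ ki'.1 * Am j i ki'.2) x)
      0 1 := by
    ext r c
    rcases r with i | i | ⟨k, i⟩ <;> rcases c with i' | i' | ⟨l, i'⟩ <;>
      simp [U, Matrix.fromBlocks, Matrix.one_apply, Prod.ext_iff, and_comm]
  have hRbig : Rbig = Matrix.fromBlocks R 0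
      (Matrix.of fun x i' => Sum.elim (fun i => s * (if i = i' then 1 else 0))
        (fun ki : Fin d × Fin n => (c0 ki.1 + s * c1 ki.1) * (if ki.2 = i' then 1 else 0)) x)
      (Matrix.fromBlocks (-1) 0 0 ((C0 + s • C1) ⊗ₖ (1 : Matrix (Fin n) (Fin n) ℂ))) := by
    ext r c
    rcases r with i | i | ⟨k, i⟩ <;> rcases c with i' | i' | ⟨l, i'⟩ <;>
      simp [Rbig, Matrix.fromBlocks, Matrix.one_apply, Matrix.kroneckerMap_apply,
        Matrix.add_apply, Matrix.smul_apply, smul_eq_mul]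
  rw [hmul, Matrix.det_mul, hU, hRbig, Matrix.det_fromBlocks_zero₂₁,
    Matrix.det_fromBlocks_zero₁₂, Matrix.det_fromBlocks_zero₁₂, Matrix.det_one,
    Matrix.det_one, one_mul, one_mul, mul_assoc]
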